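/- Let p be a prime and G an elementary abelian p-group. For each subgroup H of G with G/H cyclic fix a_H ∈ G with G = ⟨a_H, H⟩, and let ρ_K denote a linear character of G with kernel K. For H ≠ G, 1 < k < p/2, set x_{k,H} = ∏_{h ∈ H} u_{k, ord_p(k)}(a_H h), where ord_p(k) is the multiplicative order of k modulo p. Then for any subgroup K of G with G/K cyclic, ρ_K(x_{k,H}) = η_k(ζ_p)^{ord_p(k)·|H|} if K = H, and ρ_K(x_{k,H}) = 1 otherwise. -/

import Mathlib

/-!
A character `ρ` sends the Bass unit `u_{k,m}(g)`, `g ^ p = 1`, to `η_k(ρ g) ^ m`: since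
`k ^ m ≡ 1 (mod p)`, the correction term cancels the excess `k ^ m` when `ρ g = 1` and is
killed by `∑ ρ(g) ^ i = 0` otherwise. If `K = H`, every factor is therefore `η_k(ρ a) ^ m`.
If `K ≠ H`, then `ρ a = ρ b` for some `b ∈ H`: otherwise `ρ` would be trivial on `H` with
`ρ a ≠ 1`, and `G = ⟨a, H⟩` would force `ker ρ = H`. Translating by `b` turns the product into
`∏_{h ∈ H} η_k(ρ h) ^ m`, which is `1` because `η_k(w) = (1 - w ^ k) / (1 - w)` and `h ↦ h ^ k`
permutes the `p`-group `H`.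
-/

/-- The Bass unit element `u_{k,m}(g)` in the integral group ring `ℤG`. -/
noncomputable def bassElem {G : Type*} [Group G] (g : G) (k m : ℕ) : MonoidAlgebra ℤ G :=
  (∑ i ∈ Finset.range k, MonoidAlgebra.of ℤ G (g ^ i)) ^ m
    + ((1 - (k : ℤ) ^ m) / (orderOf g : ℤ)) •
        ∑ i ∈ Finset.range (orderOf g), MonoidAlgebra.of ℤ G (g ^ i)

/-- The cyclotomic unit `η_k(z) = (1 - z^k)/(1 - z)` for `z ≠ 1`, and `η_k(1) = 1`. -/
noncomputable def eta (k : ℕ) (z : ℂ) : ℂ := if z = 1 then 1 else (1 - z ^ k) / (1 - z)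

open Finset

lemma geom_sum_eq_eta {z : ℂ} (hz : z ≠ 1) (k : ℕ) : ∑ i ∈ range k, z ^ i = eta k z := by
  rw [geom_sum_eq hz, eta, if_neg hz, ← neg_sub 1 (z ^ k), ← neg_sub 1 z, neg_div_neg_eq]

lemma lift_bassElem {G : Type*} [Group G] (ρ : G →* ℂ) (g : G) {k m : ℕ}
    (hdvd : (orderOf g : ℤ) ∣ 1 - (k : ℤ) ^ m) :
    MonoidAlgebra.lift ℤ ℂ G ρ (bassElem g k m) = eta k (ρ g) ^ m := by
  set c := (1 - (k : ℤ) ^ m) / (orderOf g : ℤ)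
  have hc : (c : ℂ) * (orderOf g : ℂ) = 1 - (k : ℂ) ^ m := by
    have hc : c * orderOf g = 1 - (k : ℤ) ^ m := Int.ediv_mul_cancel hdvd
    exact_mod_cast hc
  have hlift : MonoidAlgebra.lift ℤ ℂ G ρ (bassElem g k m) =
      (∑ i ∈ range k, ρ g ^ i) ^ m + (c : ℂ) * ∑ i ∈ range (orderOf g), ρ g ^ i := by
    simp only [bassElem, c, map_add, map_pow, map_sum, map_mul, map_intCast,
      MonoidAlgebra.lift_of, zsmul_eq_mul]
  rw [hlift]
  by_cases h1 : ρ g = 1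
  · simp only [h1, one_pow, sum_const, card_range, nsmul_eq_mul, mul_one, hc, eta, if_true]
    ring
  · have hperiod : ρ g ^ orderOf g = 1 := by rw [← map_pow, pow_orderOf_eq_one, map_one]
    rw [geom_sum_eq h1 (orderOf g), hperiod, sub_self, zero_div, mul_zero, add_zero,
      geom_sum_eq_eta h1]

lemma int_dvd_one_sub_pow_orderOf (p k : ℕ) : (p : ℤ) ∣ 1 - (k : ℤ) ^ orderOf (k : ZMod p) := by
  rw [← ZMod.intCast_zmod_eq_zero_iff_dvd]
  push_cast
  rw [pow_orderOf_eq_one, sub_self]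

/-- `1 - w` with its zero at `w = 1` removed, so that products of it can be cancelled. -/
noncomputable def oneSubOrOne (w : ℂ) : ℂ := if w = 1 then 1 else 1 - w

lemma oneSubOrOne_ne_zero (w : ℂ) : oneSubOrOne w ≠ 0 := by
  unfold oneSubOrOne
  split_ifs with h
  · exact one_ne_zero
  · exact sub_ne_zero.mpr (Ne.symm h)

lemma eta_eq_oneSubOrOne_div {k : ℕ} {w : ℂ} (hw : w ^ k = 1 → w = 1) :
    eta k w = oneSubOrOne (w ^ k) / oneSubOrOne w := by
  by_cases h1 : w = 1
  · simp [eta, oneSubOrOne, h1]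
  · rw [eta, oneSubOrOne, oneSubOrOne, if_neg h1, if_neg h1, if_neg (mt hw h1)]

lemma IsPGroup.eq_one_of_map_pow_eq_one {p : ℕ} {H M : Type*} [Group H] [Monoid M]
    (hH : IsPGroup p H) {k : ℕ} (hk : p.Coprime k) (χ : H →* M) {h : H}
    (hχ : χ h ^ k = 1) : χ h = 1 :=
  orderOf_eq_one_iff.mp <| Nat.Coprime.eq_one_of_dvd
    (Nat.Coprime.coprime_dvd_left (orderOf_map_dvd χ h) (hH.orderOf_coprime hk h))
    (orderOf_dvd_of_pow_eq_one hχ)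

/-- The `k`-th power map permutes the `p`-group `H`, so the quotients in
`eta_eq_oneSubOrOne_div` cancel in the product. -/
lemma IsPGroup.prod_eta_map_eq_one {p : ℕ} {H : Type*} [CommGroup H] [Fintype H]
    (hH : IsPGroup p H) {k : ℕ} (hk : p.Coprime k) (χ : H →* ℂ) :
    ∏ h, eta k (χ h) = 1 := by
  have hperm : ∏ h, oneSubOrOne (χ h ^ k) = ∏ h, oneSubOrOne (χ h) := by
    simpa only [powEquiv_apply, map_pow] using
      (hH.powEquiv hk).prod_comp (fun h => oneSubOrOne (χ h))
  rw [prod_congr rfl fun h _ => eta_eq_oneSubOrOne_div (hH.eq_one_of_map_pow_eq_one hk χ),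
    prod_div_distrib, hperm, div_self (prod_ne_zero_iff.mpr fun w _ => oneSubOrOne_ne_zero _)]

lemma ker_eq_of_closure_insert_eq_top {G M : Type*} [CommGroup G] [Monoid M] (ρ : G →* M)
    {H : Subgroup G} {a : G} (ha : Subgroup.closure (insert a (H : Set G)) = ⊤)
    (hH : H ≤ ρ.ker) (horder : orderOf (ρ a) = orderOf a) : ρ.ker = H := by
  refine le_antisymm (fun x hx => ?_) hH
  have hx' : x ∈ Subgroup.closure {a} ⊔ H := by
    rw [← Subgroup.closure_eq H, ← Subgroup.closure_union, ← Set.insert_eq, ha]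
    exact Subgroup.mem_top x
  obtain ⟨y, hy, z, hz, rfl⟩ := Subgroup.mem_sup.mp hx'
  obtain ⟨n, rfl⟩ := Subgroup.mem_closure_singleton.mp hy
  have hρz : ρ z = 1 := hH hz
  have hρan : ρ.toHomUnits a ^ n = 1 := by
    rw [← map_zpow]
    refine Units.ext ?_
    simpa only [MonoidHom.coe_toHomUnits, Units.val_one, MonoidHom.mem_ker, map_mul, hρz,
      mul_one] using hx
  have hdvd : (orderOf a : ℤ) ∣ n := by
    rw [← horder, ← ρ.coe_toHomUnits, orderOf_units]
    exact orderOf_dvd_iff_zpow_eq_one.mpr hρan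
  rwa [orderOf_dvd_iff_zpow_eq_one.mp hdvd, one_mul]

lemma exists_mem_map_eq_of_ker_ne {p : ℕ} [Fact p.Prime] {G R : Type*} [CommGroup G]
    [CommRing R] [IsDomain R] (hG : ∀ g : G, g ^ p = 1) (ρ : G →* R) {H : Subgroup G} {a : G}
    (ha : Subgroup.closure (insert a (H : Set G)) = ⊤) (hne : ρ.ker ≠ H) :
    ∃ b ∈ H, ρ b = ρ a := by
  by_contra! hno
  have hρp (g : G) : ρ g ^ p = 1 := by rw [← map_pow, hG, map_one]
  have hρa : ρ a ≠ 1 := fun h => hno 1 H.one_mem (by rw [map_one, h])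
  have hH : H ≤ ρ.ker := fun h hh => by
    by_contra hρh
    have hprim : IsPrimitiveRoot (ρ h) p :=
      orderOf_eq_prime (hρp h) hρh ▸ IsPrimitiveRoot.orderOf (ρ h)
    obtain ⟨i, -, hi⟩ := hprim.eq_pow_of_pow_eq_one (hρp a)
    exact hno (h ^ i) (H.pow_mem hh i) (by rw [map_pow, hi])
  have horder : orderOf (ρ a) = orderOf a := by
    have ha1 : a ≠ 1 := by rintro rfl; exact hρa ρ.map_one
    rw [orderOf_eq_prime (hρp a) hρa, orderOf_eq_prime (hG a) ha1]
  exact hne (ker_eq_of_closure_insert_eq_top ρ ha hH horder)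

theorem elementary_abelian_character_prod_general {p : ℕ} (hp : p.Prime) {G : Type*} [CommGroup G]
    [Fintype G] (hG : ∀ g : G, g ^ p = 1)
    (H K : Subgroup G) (a : G) (ha : Subgroup.closure (insert a (H : Set G)) = ⊤)
    (ρ : G →* ℂ) (hker : ∀ x, ρ x = 1 ↔ x ∈ K)
    (k : ℕ) (hk1 : 1 < k) (hk2 : 2 * k < p) :
    (K = H →
      MonoidAlgebra.lift ℤ ℂ G ρ (∏ᶠ h : H, bassElem (a * h) k (orderOf (k : ZMod p)))
        = eta k (ρ a) ^ (orderOf (k : ZMod p) * Nat.card H)) ∧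
    (K ≠ H →
      MonoidAlgebra.lift ℤ ℂ G ρ (∏ᶠ h : H, bassElem (a * h) k (orderOf (k : ZMod p)))
        = 1) := by
  classical
  have : Fact p.Prime := ⟨hp⟩
  set m := orderOf (k : ZMod p)
  obtain rfl : K = ρ.ker := by ext x; exact (hker x).symm
  have hlift : MonoidAlgebra.lift ℤ ℂ G ρ (∏ᶠ h : H, bassElem (a * h) k m) =
      ∏ h : H, eta k (ρ a * ρ h) ^ m := by
    rw [finprod_eq_prod_of_fintype, map_prod]
    refine prod_congr rfl fun h _ => ?_
    have hdvd := (Int.natCast_dvd_natCast.mpr (orderOf_dvd_of_pow_eq_one (hG (a * h)))).trans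
      (int_dvd_one_sub_pow_orderOf p k)
    rw [lift_bassElem ρ _ hdvd, map_mul]
  rw [hlift]
  refine ⟨fun hKH => ?_, fun hKH => ?_⟩
  · have hρH (h : H) : ρ h = 1 := hKH ▸ h.2
    simp only [hρH, mul_one]
    rw [prod_const, card_univ, ← pow_mul, Nat.card_eq_fintype_card]
  · obtain ⟨b, hbH, hb⟩ := exists_mem_map_eq_of_ker_ne hG ρ ha hKH
    have hpH : IsPGroup p H := fun h => ⟨1, Subtype.ext (by simpa using hG h)⟩
    have hpk : p.Coprime k :=
      hp.coprime_iff_not_dvd.mpr (Nat.not_dvd_of_pos_of_lt (by omega) (by omega))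
    calc ∏ h : H, eta k (ρ a * ρ h) ^ m = ∏ h : H, eta k (ρ h) ^ m := by
          rw [← hb]
          simpa only [Equiv.coe_mulLeft, Subgroup.coe_mul, map_mul] using
            Equiv.prod_comp (Equiv.mulLeft (⟨b, hbH⟩ : H)) fun h => eta k (ρ h) ^ m
      _ = (∏ h : H, eta k (ρ.comp H.subtype h)) ^ m := prod_pow _ _ _
      _ = 1 := by rw [hpH.prod_eta_map_eq_one hpk, one_pow]

theorem elementary_abelian_character_prod {p : ℕ} (hp : p.Prime) {G : Type*} [CommGroup G]
    [Fintype G] (hG : ∀ g : G, g ^ p = 1)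
    (H K : Subgroup G) (hH : IsCyclic (G ⧸ H)) (hK : IsCyclic (G ⧸ K)) (hHne : H ≠ ⊤)
    (a : G) (ha : Subgroup.closure (insert a (H : Set G)) = ⊤)
    (ρ : G →* ℂ) (hker : ∀ x, ρ x = 1 ↔ x ∈ K)
    (hρa : K = H → IsPrimitiveRoot (ρ a) p)
    (k : ℕ) (hk1 : 1 < k) (hk2 : 2 * k < p) :
    (K = H →
      MonoidAlgebra.lift ℤ ℂ G ρ (∏ᶠ h : H, bassElem (a * h) k (orderOf (k : ZMod p)))
        = eta k (ρ a) ^ (orderOf (k : ZMod p) * Nat.card H)) ∧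
    (K ≠ H →
      MonoidAlgebra.lift ℤ ℂ G ρ (∏ᶠ h : H, bassElem (a * h) k (orderOf (k : ZMod p)))
        = 1) :=
  elementary_abelian_character_prod_general hp hG H K a ha ρ hker k hk1 hk2
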